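/- The number of single-peaked (n,4)-elections equals 24 · 4^{n-1} · (2^{n+1} − 3). -/

import Mathlib

def SPwrt {m : ℕ} (V A : Equiv.Perm (Fin m)) : Prop :=
  ∀ c₁ c₂ c₃ : Fin m, ¬(A c₁ < A c₂ ∧ A c₂ < A c₃ ∧ V c₁ < V c₂ ∧ V c₃ < V c₂)

def SPElection {n m : ℕ} (P : Fin n → Equiv.Perm (Fin m)) : Prop :=
  ∃ A : Equiv.Perm (Fin m), ∀ i, SPwrt (P i) A

/-!
Relabelling the candidates, i.e. multiplying every vote and the axis on the right by the same
permutation, preserves single-peakedness. Normalising the first vote to `1 = abcd` therefore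
divides the count by `4! = 24`. An axis on which `abcd` is single-peaked has one of only four
domains `Dₖ` of single-peaked votes (those of `abcd`, `bacd`, `cbad`, `cabd`), so an election
`abcd, V₁, …, Vₘ` is single-peaked iff all `Vⱼ` lie in a common `Dₖ`. Every `Dₖ` has 8 elements,
pairwise intersections have 2 or 4, and triple intersections 2, so inclusion–exclusion over the
four sets `Dₖ ^ m` gives `4 · 8 ^ m - 3 · 4 ^ m` such elections.
-/

open Finset Equiv Fintype

theorem Finset.card_union₄_add_card_inter {α : Type*} [DecidableEq α] (A B C D : Finset α) :
    #(A ∪ B ∪ C ∪ D) + #(A ∩ B) + #(A ∩ C) + #(A ∩ D) + #(B ∩ C) + #(B ∩ D) + #(C ∩ D)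
        + #(A ∩ B ∩ C ∩ D) =
      #A + #B + #C + #D + #(A ∩ B ∩ C) + #(A ∩ B ∩ D) + #(A ∩ C ∩ D) + #(B ∩ C ∩ D) := by
  have h₁ := card_union_add_card_inter A B
  have h₂ : #(A ∪ B ∪ C) + #(A ∩ C ∪ B ∩ C) = #(A ∪ B) + #C := by
    rw [← union_inter_distrib_right]; exact card_union_add_card_inter ..
  have h₃ : #(A ∩ C ∪ B ∩ C) + #(A ∩ B ∩ C) = #(A ∩ C) + #(B ∩ C) := by
    rw [inter_inter_distrib_right]; exact card_union_add_card_inter ..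
  have h₄ : #(A ∪ B ∪ C ∪ D) + #(A ∩ D ∪ B ∩ D ∪ C ∩ D) = #(A ∪ B ∪ C) + #D := by
    rw [← union_inter_distrib_right, ← union_inter_distrib_right]
    exact card_union_add_card_inter ..
  have h₅ : #(A ∩ D ∪ B ∩ D) + #(A ∩ B ∩ D) = #(A ∩ D) + #(B ∩ D) := by
    rw [inter_inter_distrib_right]; exact card_union_add_card_inter ..
  have h₆ : #(A ∩ D ∪ B ∩ D ∪ C ∩ D) + #(A ∩ C ∩ D ∪ B ∩ C ∩ D) =
      #(A ∩ D ∪ B ∩ D) + #(C ∩ D) := by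
    rw [inter_inter_distrib_right A C, inter_inter_distrib_right B C,
      ← union_inter_distrib_right (A ∩ D) (B ∩ D) (C ∩ D)]
    exact card_union_add_card_inter ..
  have h₇ : #(A ∩ C ∩ D ∪ B ∩ C ∩ D) + #(A ∩ B ∩ C ∩ D) = #(A ∩ C ∩ D) + #(B ∩ C ∩ D) := by
    rw [inter_inter_distrib_right A B C, inter_inter_distrib_right (A ∩ C)]
    exact card_union_add_card_inter ..
  omega

instance {m : ℕ} (V A : Perm (Fin m)) : Decidable (SPwrt V A) :=
  inferInstanceAs (Decidable (∀ _ _ _, _))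

namespace SPwrt

variable {m : ℕ} {V A : Perm (Fin m)}

theorem mul_right (h : SPwrt V A) (g : Perm (Fin m)) : SPwrt (V * g) (A * g) :=
  fun c₁ c₂ c₃ => h (g c₁) (g c₂) (g c₃)

theorem mul_right_iff (g : Perm (Fin m)) : SPwrt (V * g) (A * g) ↔ SPwrt V A :=
  ⟨fun h => by simpa [mul_assoc] using h.mul_right g⁻¹, fun h => h.mul_right g⟩

end SPwrt

namespace SPElection

theorem mul_right_iff {n m : ℕ} (P : Fin n → Perm (Fin m)) (g : Perm (Fin m)) :
    SPElection (fun i => P i * g) ↔ SPElection P := by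
  refine ⟨fun ⟨A, hA⟩ => ⟨A * g⁻¹, fun i => ?_⟩,
    fun ⟨A, hA⟩ => ⟨A * g, fun i => (hA i).mul_right g⟩⟩
  simpa [mul_assoc] using (hA i).mul_right g⁻¹

theorem card_succ (n m : ℕ) :
    Nat.card {P : Fin (n + 1) → Perm (Fin m) // SPElection P} =
      Nat.card {Q : Fin n → Perm (Fin m) // SPElection (Fin.cons 1 Q : Fin (n + 1) → _)} *
        m.factorial := by
  let e : (Fin n → Perm (Fin m)) × Perm (Fin m) ≃ (Fin (n + 1) → Perm (Fin m)) :=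
    { toFun x i := (Fin.cons 1 x.1 : Fin (n + 1) → Perm (Fin m)) i * x.2
      invFun P := (fun j => P j.succ * (P 0)⁻¹, P 0)
      left_inv x := by simp
      right_inv P := by ext i; cases i using Fin.cases <;> simp }
  rw [← Nat.card_congr (e.subtypeEquiv fun x => (mul_right_iff _ x.2).symm),
    Nat.card_congr (prodSubtypeFstEquivSubtypeProd (p := fun Q : Fin n → Perm (Fin m) =>
      SPElection (Fin.cons 1 Q : Fin (n + 1) → _))), Nat.card_prod, Nat.card_perm, Nat.card_fin]

end SPElection

def spDomain {m : ℕ} (A : Perm (Fin m)) : Finset (Perm (Fin m)) := {V | SPwrt V A}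

@[simp] theorem mem_spDomain {m : ℕ} {V A : Perm (Fin m)} : V ∈ spDomain A ↔ SPwrt V A := by
  simp [spDomain]

theorem card_spDomain_four (A : Perm (Fin 4)) : #(spDomain A) = 8 := by
  revert A; decide

namespace FourCandidates

/-- With candidates `a, b, c, d = 0, 1, 2, 3`, an axis `A` puts candidate `x` at position `A x`;
these are the axes `abcd`, `bacd`, `cbad` and `cabd`. -/
def axis : Fin 4 → Perm (Fin 4) := ![1, swap 0 1, swap 0 2, swap 0 1 * swap 1 2]

theorem spwrt_one_axis (k : Fin 4) : SPwrt 1 (axis k) := by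
  revert k; decide

theorem exists_spDomain_eq_axis (A : Perm (Fin 4)) (h : SPwrt 1 A) :
    ∃ k, spDomain A = spDomain (axis k) := by
  revert A; decide

theorem card_spDomain_axis_inter :
    #(spDomain (axis 0) ∩ spDomain (axis 1)) = 2 ∧ #(spDomain (axis 0) ∩ spDomain (axis 2)) = 4 ∧
    #(spDomain (axis 0) ∩ spDomain (axis 3)) = 2 ∧ #(spDomain (axis 1) ∩ spDomain (axis 2)) = 2 ∧
    #(spDomain (axis 1) ∩ spDomain (axis 3)) = 4 ∧ #(spDomain (axis 2) ∩ spDomain (axis 3)) = 4 := by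
  decide

theorem card_spDomain_axis_inter₃ :
    #(spDomain (axis 0) ∩ spDomain (axis 1) ∩ spDomain (axis 2)) = 2 ∧
    #(spDomain (axis 0) ∩ spDomain (axis 1) ∩ spDomain (axis 3)) = 2 ∧
    #(spDomain (axis 0) ∩ spDomain (axis 2) ∩ spDomain (axis 3)) = 2 ∧
    #(spDomain (axis 1) ∩ spDomain (axis 2) ∩ spDomain (axis 3)) = 2 ∧
    #(spDomain (axis 0) ∩ spDomain (axis 1) ∩ spDomain (axis 2) ∩ spDomain (axis 3)) = 2 := by
  decide

theorem spElection_cons_one_iff {n : ℕ} (Q : Fin n → Perm (Fin 4)) :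
    SPElection (Fin.cons 1 Q : Fin (n + 1) → Perm (Fin 4)) ↔
      Q ∈ (piFinset fun _ => spDomain (axis 0)) ∪ (piFinset fun _ => spDomain (axis 1)) ∪
        (piFinset fun _ => spDomain (axis 2)) ∪ (piFinset fun _ => spDomain (axis 3)) := by
  suffices SPElection (Fin.cons 1 Q : Fin (n + 1) → Perm (Fin 4)) ↔
      ∃ k, ∀ j, Q j ∈ spDomain (axis k) by
    simpa [Fin.exists_fin_succ, or_assoc] using this
  constructor
  · rintro ⟨A, hA⟩
    obtain ⟨k, hk⟩ := exists_spDomain_eq_axis A (hA 0)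
    exact ⟨k, fun j => hk ▸ mem_spDomain.2 (hA j.succ)⟩
  · rintro ⟨k, hk⟩
    exact ⟨axis k, Fin.cases (spwrt_one_axis k) fun j => mem_spDomain.1 (hk j)⟩

theorem card_spElection_cons_one (n : ℕ) :
    Nat.card {Q : Fin n → Perm (Fin 4) // SPElection (Fin.cons 1 Q : Fin (n + 1) → _)} +
      3 * 4 ^ n = 4 * 8 ^ n := by
  rw [Nat.card_congr (subtypeEquivRight spElection_cons_one_iff), Nat.card_eq_finsetCard]
  have h := card_union₄_add_card_inter (piFinset fun _ : Fin n => spDomain (axis 0))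
    (piFinset fun _ => spDomain (axis 1)) (piFinset fun _ => spDomain (axis 2))
    (piFinset fun _ => spDomain (axis 3))
  simp only [← piFinset_inter, card_piFinset_const, card_spDomain_four] at h
  obtain ⟨h01, h02, h03, h12, h13, h23⟩ := card_spDomain_axis_inter
  obtain ⟨h012, h013, h023, h123, h0123⟩ := card_spDomain_axis_inter₃
  rw [h01, h02, h03, h12, h13, h23, h012, h013, h023, h123, h0123] at h
  omega

end FourCandidates

open FourCandidates in
/-- The number of single-peaked `(n,4)`-elections equals `24 · 4^(n−1) · (2^(n+1) − 3)`. -/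
theorem count_single_peaked_four_candidates (n : ℕ) (hn : 1 ≤ n) :
    {P : Fin n → Equiv.Perm (Fin 4) | SPElection P}.ncard =
      24 * 4 ^ (n - 1) * (2 ^ (n + 1) - 3) := by
  obtain ⟨m, rfl⟩ : ∃ m, n = m + 1 := ⟨n - 1, by omega⟩
  have h := card_spElection_cons_one m
  rw [show 8 ^ m = 4 ^ m * 2 ^ m from mul_pow 4 2 m] at h
  rw [← Nat.card_coe_set_eq, Set.coe_ofPred, SPElection.card_succ, Nat.add_sub_cancel,
    show Nat.factorial 4 = 24 from rfl]
  have h4 : 2 ^ 2 ≤ 2 ^ (m + 1 + 1) := Nat.pow_le_pow_right two_pos (by omega)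
  zify [show 3 ≤ 2 ^ (m + 1 + 1) by omega] at h ⊢
  linear_combination 24 * h
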